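/- arXiv:2301.01555 — 4 statements merged into one kernel-verified Lean document; each statement's English description precedes it below -/
import Mathlib

section
/- For constants Θ, K ∈ ℝ and σ, A > 0, the supremum over y ∈ ℝ of f(x+y) - y²/(4σ√A), where f(z) = max(0, Θ(z-K)), equals max(0, Θ(x-K) + σ√A·Θ²). -/
open Real

theorem stmt0 (Θ K σ A : ℝ) (hσ : 0 < σ) (hA : 0 < A) (x : ℝ) :
    (⨆ y : ℝ, (max 0 (Θ * (x + y - K)) - y ^ 2 / (4 * σ * Real.sqrt A)))
      = max 0 (Θ * (x - K) + σ * Real.sqrt A * Θ ^ 2) := by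
  have hc : 0 < σ * Real.sqrt A := mul_pos hσ (Real.sqrt_pos.2 hA)
  have h4 : 4 * σ * Real.sqrt A = 4 * (σ * Real.sqrt A) := by ring
  simp only [h4]
  set c := σ * Real.sqrt A with hcdef
  have key : ∀ y : ℝ, max 0 (Θ * (x + y - K)) - y ^ 2 / (4 * c)
      ≤ max 0 (Θ * (x - K) + c * Θ ^ 2) := by
    intro y
    rw [sub_le_iff_le_add]
    apply max_le
    · have : 0 ≤ y ^ 2 / (4 * c) := by positivity
      have h0 : (0:ℝ) ≤ max 0 (Θ * (x - K) + c * Θ ^ 2) := le_max_left _ _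
      linarith
    · have h1 : Θ * y - c * Θ ^ 2 ≤ y ^ 2 / (4 * c) := by
        rw [le_div_iff₀ (by positivity : (0:ℝ) < 4 * c)]
        nlinarith [sq_nonneg (y - 2 * c * Θ)]
      have h2 : Θ * (x - K) + c * Θ ^ 2 ≤ max 0 (Θ * (x - K) + c * Θ ^ 2) :=
        le_max_right _ _
      nlinarith
  have hbdd : BddAbove (Set.range fun y : ℝ =>
      max 0 (Θ * (x + y - K)) - y ^ 2 / (4 * c)) :=
    ⟨max 0 (Θ * (x - K) + c * Θ ^ 2), by rintro _ ⟨y, rfl⟩; exact key y⟩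
  apply le_antisymm
  · exact ciSup_le key
  · apply max_le
    · have h := le_ciSup hbdd 0
      simp only [add_zero, ne_eq, OfNat.ofNat_ne_zero, not_false_eq_true,
        zero_pow, zero_div, sub_zero] at h
      exact le_trans (le_max_left _ _) h
    · have h := le_ciSup hbdd (2 * c * Θ)
      have heq : (2 * c * Θ) ^ 2 / (4 * c) = c * Θ ^ 2 := by
        field_simp; ring
      have hm : Θ * (x + 2 * c * Θ - K) ≤ max 0 (Θ * (x + 2 * c * Θ - K)) :=
        le_max_right _ _
      have hstep : Θ * (x - K) + c * Θ ^ 2 ≤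
          max 0 (Θ * (x + 2 * c * Θ - K)) - (2 * c * Θ) ^ 2 / (4 * c) := by
        rw [heq]; nlinarith
      exact hstep.trans h
end

section
/- Let ρ, T > 0 and let F : [0,T] → ℝ be differentiable with F satisfying the ODE F'(t) = √ρ·(cosh(√ρ(T-t))/(2cosh²(√ρ(T-t)/2))·Υ(t) - tanh(√ρ(T-t))·F(t)) where Υ : [0,T] → ℝ is measurable with |Υ(t)| ≤ Θ for all t, and F(0) = Φ₀·coth(√ρ·T). Then |F(T)| ≤ |Φ₀|/sinh(√ρ·T) + |Θ|. -/
open Real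

noncomputable def coth (x : ℝ) : ℝ := Real.cosh x / Real.sinh x

private lemma tanh_half_deriv (c T : ℝ) (t : ℝ) :
    HasDerivAt (fun s => Real.tanh (c * (T - s) / 2))
      (-(c / 2) / Real.cosh (c * (T - t) / 2) ^ 2) t := by
  have h1 : HasDerivAt (fun s : ℝ => c * (T - s) / 2) (-(c / 2)) t := by
    have h0 : HasDerivAt (fun s : ℝ => T - s) (-1) t :=
      (hasDerivAt_id t).const_sub T
    simpa [neg_div] using (h0.const_mul c).div_const 2
  have hs : HasDerivAt (fun s : ℝ => Real.sinh (c * (T - s) / 2))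
      (Real.cosh (c * (T - t) / 2) * -(c / 2)) t := h1.sinh
  have hc : HasDerivAt (fun s : ℝ => Real.cosh (c * (T - s) / 2))
      (Real.sinh (c * (T - t) / 2) * -(c / 2)) t := h1.cosh
  have hcosh : Real.cosh (c * (T - t) / 2) ≠ 0 := (Real.cosh_pos _).ne'
  have := hs.div hc hcosh
  have heq : ∀ s : ℝ, Real.tanh (c * (T - s) / 2) =
      Real.sinh (c * (T - s) / 2) / Real.cosh (c * (T - s) / 2) := fun s =>
    Real.tanh_eq_sinh_div_cosh _
  rw [show (fun s => Real.tanh (c * (T - s) / 2)) =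
      fun s => Real.sinh (c * (T - s) / 2) / Real.cosh (c * (T - s) / 2) from funext heq]
  convert this using 1
  case e'_4 => rfl
  case e'_5 => rfl
  case e'_8 => rfl
  have hpyth : Real.cosh (c * (T - t) / 2) ^ 2 - Real.sinh (c * (T - t) / 2) ^ 2 = 1 :=
    Real.cosh_sq_sub_sinh_sq _
  have hnum : Real.cosh (c * (T - t) / 2) * -(c / 2) * Real.cosh (c * (T - t) / 2) -
      Real.sinh (c * (T - t) / 2) * (Real.sinh (c * (T - t) / 2) * -(c / 2)) = -(c / 2) := by
    linear_combination (-(c / 2)) * hpyth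
  rw [hnum]

private lemma tanh_le_one (x : ℝ) : Real.tanh x ≤ 1 := by
  rw [Real.tanh_eq_sinh_div_cosh, div_le_one (Real.cosh_pos _)]
  nlinarith [Real.cosh_sub_sinh x, Real.exp_pos (-x)]

private lemma key_bound (c T Θ : ℝ) (hc : 0 < c) (hT : 0 < T) (hΘ : 0 ≤ Θ)
    (G Υ : ℝ → ℝ)
    (hΥ : ∀ t ∈ Set.Icc (0:ℝ) T, |Υ t| ≤ Θ)
    (hG : ∀ t ∈ Set.Icc (0:ℝ) T,
      HasDerivAt G (c * Υ t / (2 * Real.cosh (c * (T - t) / 2) ^ 2)) t) :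
    |G T| ≤ |G 0| + Θ := by
  -- H t = G t + Θ * tanh(c(T-t)/2) is antitone; K t = G t - Θ tanh(...) is monotone
  have hmemT : (T:ℝ) ∈ Set.Icc (0:ℝ) T := ⟨le_of_lt hT, le_refl T⟩
  have hmem0 : (0:ℝ) ∈ Set.Icc (0:ℝ) T := ⟨le_refl 0, le_of_lt hT⟩
  have hint : interior (Set.Icc (0:ℝ) T) = Set.Ioo 0 T := interior_Icc
  have hH : ∀ t ∈ Set.Icc (0:ℝ) T,
      HasDerivAt (fun s => G s + Θ * Real.tanh (c * (T - s) / 2))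
        (c * Υ t / (2 * Real.cosh (c * (T - t) / 2) ^ 2)
          + Θ * (-(c / 2) / Real.cosh (c * (T - t) / 2) ^ 2)) t :=
    fun t ht => (hG t ht).add ((tanh_half_deriv c T t).const_mul Θ)
  have hK : ∀ t ∈ Set.Icc (0:ℝ) T,
      HasDerivAt (fun s => G s - Θ * Real.tanh (c * (T - s) / 2))
        (c * Υ t / (2 * Real.cosh (c * (T - t) / 2) ^ 2)
          - Θ * (-(c / 2) / Real.cosh (c * (T - t) / 2) ^ 2)) t :=
    fun t ht => (hG t ht).sub ((tanh_half_deriv c T t).const_mul Θ)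
  have hHcont : ContinuousOn (fun s => G s + Θ * Real.tanh (c * (T - s) / 2))
      (Set.Icc (0:ℝ) T) := fun t ht => ((hH t ht).continuousAt).continuousWithinAt
  have hKcont : ContinuousOn (fun s => G s - Θ * Real.tanh (c * (T - s) / 2))
      (Set.Icc (0:ℝ) T) := fun t ht => ((hK t ht).continuousAt).continuousWithinAt
  have hbound : ∀ t ∈ Set.Icc (0:ℝ) T,
      c * Υ t / (2 * Real.cosh (c * (T - t) / 2) ^ 2)
        + Θ * (-(c / 2) / Real.cosh (c * (T - t) / 2) ^ 2) ≤ 0 := by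
    intro t ht
    have hcosh : (0:ℝ) < Real.cosh (c * (T - t) / 2) ^ 2 :=
      pow_pos (Real.cosh_pos _) 2
    have h1 : Υ t ≤ Θ := (abs_le.mp (hΥ t ht)).2
    have : c * Υ t / (2 * Real.cosh (c * (T - t) / 2) ^ 2)
        + Θ * (-(c / 2) / Real.cosh (c * (T - t) / 2) ^ 2)
        = c * (Υ t - Θ) / (2 * Real.cosh (c * (T - t) / 2) ^ 2) := by
      field_simp; ring
    rw [this]
    apply div_nonpos_of_nonpos_of_nonneg
    · nlinarith
    · positivity
  have hbound' : ∀ t ∈ Set.Icc (0:ℝ) T,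
      0 ≤ c * Υ t / (2 * Real.cosh (c * (T - t) / 2) ^ 2)
        - Θ * (-(c / 2) / Real.cosh (c * (T - t) / 2) ^ 2) := by
    intro t ht
    have hcosh : (0:ℝ) < Real.cosh (c * (T - t) / 2) ^ 2 :=
      pow_pos (Real.cosh_pos _) 2
    have h1 : -Θ ≤ Υ t := (abs_le.mp (hΥ t ht)).1
    have : c * Υ t / (2 * Real.cosh (c * (T - t) / 2) ^ 2)
        - Θ * (-(c / 2) / Real.cosh (c * (T - t) / 2) ^ 2)
        = c * (Υ t + Θ) / (2 * Real.cosh (c * (T - t) / 2) ^ 2) := by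
      field_simp; ring
    rw [this]
    apply div_nonneg
    · nlinarith
    · positivity
  have hHanti : AntitoneOn (fun s => G s + Θ * Real.tanh (c * (T - s) / 2))
      (Set.Icc (0:ℝ) T) := by
    apply antitoneOn_of_deriv_nonpos (convex_Icc 0 T) hHcont
    · intro t ht
      rw [hint] at ht
      exact (hH t (Set.mem_Icc_of_Ioo ht)).differentiableAt.differentiableWithinAt
    · intro t ht
      rw [hint] at ht
      rw [(hH t (Set.mem_Icc_of_Ioo ht)).deriv]
      exact hbound t (Set.mem_Icc_of_Ioo ht)
  have hKmono : MonotoneOn (fun s => G s - Θ * Real.tanh (c * (T - s) / 2))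
      (Set.Icc (0:ℝ) T) := by
    apply monotoneOn_of_deriv_nonneg (convex_Icc 0 T) hKcont
    · intro t ht
      rw [hint] at ht
      exact (hK t (Set.mem_Icc_of_Ioo ht)).differentiableAt.differentiableWithinAt
    · intro t ht
      rw [hint] at ht
      rw [(hK t (Set.mem_Icc_of_Ioo ht)).deriv]
      exact hbound' t (Set.mem_Icc_of_Ioo ht)
  have hH' := hHanti hmem0 hmemT (le_of_lt hT)
  have hK' := hKmono hmem0 hmemT (le_of_lt hT)
  simp only [sub_self, mul_zero, zero_div, Real.tanh_zero] at hH' hK'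
  have htanh : Real.tanh (c * (T - 0) / 2) ≤ 1 := tanh_le_one _
  have hGT_ub : G T ≤ |G 0| + Θ := by
    have := le_abs_self (G 0)
    nlinarith
  have hGT_lb : -(|G 0| + Θ) ≤ G T := by
    have := neg_abs_le (G 0)
    nlinarith
  exact abs_le.mpr ⟨hGT_lb, hGT_ub⟩

theorem stmt3 (ρ T Θ Φ₀ : ℝ) (hρ : 0 < ρ) (hT : 0 < T) (hΘ : 0 ≤ Θ)
    (F Υ : ℝ → ℝ) (hΥmeas : Measurable Υ)
    (hΥ : ∀ t ∈ Set.Icc (0:ℝ) T, |Υ t| ≤ Θ)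
    (hF : ∀ t ∈ Set.Icc (0:ℝ) T,
      HasDerivAt F (Real.sqrt ρ *
        (Real.cosh (Real.sqrt ρ * (T - t)) /
          (2 * (Real.cosh (Real.sqrt ρ * (T - t) / 2)) ^ 2) * Υ t
         - Real.tanh (Real.sqrt ρ * (T - t)) * F t)) t)
    (hF0 : F 0 = Φ₀ * coth (Real.sqrt ρ * T)) :
    |F T| ≤ |Φ₀| / Real.sinh (Real.sqrt ρ * T) + |Θ| := by
  set c := Real.sqrt ρ with hc_def
  have hc : 0 < c := Real.sqrt_pos.mpr hρ
  set G : ℝ → ℝ := fun t => F t / Real.cosh (c * (T - t)) with hG_def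
  have hG : ∀ t ∈ Set.Icc (0:ℝ) T,
      HasDerivAt G (c * Υ t / (2 * Real.cosh (c * (T - t) / 2) ^ 2)) t := by
    intro t ht
    have h1 : HasDerivAt (fun s : ℝ => c * (T - s)) (-c) t := by
      have : HasDerivAt (fun s : ℝ => T - s) (-1) t := (hasDerivAt_id t).const_sub T
      simpa using this.const_mul c
    have hch : HasDerivAt (fun s : ℝ => Real.cosh (c * (T - s)))
        (Real.sinh (c * (T - t)) * -c) t := h1.cosh
    have hcosh : Real.cosh (c * (T - t)) ≠ 0 := (Real.cosh_pos _).ne'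
    have hcosh2 : Real.cosh (c * (T - t) / 2) ≠ 0 := (Real.cosh_pos _).ne'
    have := (hF t ht).div hch hcosh
    convert this using 1
    case e'_4 => rfl
    case e'_5 => rfl
    case e'_8 => rfl
    rw [Real.tanh_eq_sinh_div_cosh]
    field_simp
    ring
  have hGT : G T = F T := by simp [hG_def]
  have hsinh : 0 < Real.sinh (c * T) := Real.sinh_pos_iff.mpr (by positivity)
  have hG0 : G 0 = Φ₀ / Real.sinh (c * T) := by
    simp only [hG_def, sub_zero, hF0, coth]
    field_simp
  have key := key_bound c T Θ hc hT hΘ G Υ hΥ hG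
  rw [hGT, hG0, abs_div, abs_of_pos hsinh] at key
  calc |F T| ≤ |Φ₀| / Real.sinh (c * T) + Θ := key
    _ = |Φ₀| / Real.sinh (c * T) + |Θ| := by rw [abs_of_nonneg hΘ]
end

section
/- Let ρ, T > 0, x, y ∈ ℝ with √ρT - 2tanh(√ρT/2) ≠ 0. Define c₃ = (√ρ·y - x·tanh(√ρT/2))/(√ρT - 2tanh(√ρT/2)), c₁ = (x - c₃)/sinh(√ρT), c₂ = -c₃/sinh(√ρT), and δ(t) = c₁sinh(√ρt) + c₂sinh(√ρ(T-t)) + c₃. Then δ(0) = 0, δ(T) = x, and ∫₀ᵀ δ(t) dt = y. -/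
open Real

lemma sinh_int (a b : ℝ) (ha : a ≠ 0) :
    (∫ t in (0:ℝ)..b, Real.sinh (a * t)) = (Real.cosh (a * b) - 1) / a := by
  have h : ∀ t ∈ Set.uIcc (0:ℝ) b, HasDerivAt (fun t => Real.cosh (a * t) / a)
      (Real.sinh (a * t)) t := by
    intro t _
    have h1 : HasDerivAt (fun t : ℝ => a * t) a t := by
      simpa using (hasDerivAt_id t).const_mul a
    have h2 := ((Real.hasDerivAt_cosh (a * t)).comp t h1).div_const a
    simpa [mul_comm, mul_div_assoc, mul_div_cancel_left₀ _ ha] using h2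
  have hint : IntervalIntegrable (fun t => Real.sinh (a * t)) MeasureTheory.volume 0 b :=
    (Real.continuous_sinh.comp (continuous_const.mul continuous_id)).intervalIntegrable 0 b
  have h3 := intervalIntegral.integral_eq_sub_of_hasDerivAt h hint
  rw [h3, mul_zero, Real.cosh_zero]
  ring

theorem stmt7 (ρ T x y : ℝ) (hρ : 0 < ρ) (hT : 0 < T)
    (hden : Real.sqrt ρ * T - 2 * Real.tanh (Real.sqrt ρ * T / 2) ≠ 0)
    (c₃ : ℝ) (hc₃ : c₃ = (Real.sqrt ρ * y - x * Real.tanh (Real.sqrt ρ * T / 2)) /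
      (Real.sqrt ρ * T - 2 * Real.tanh (Real.sqrt ρ * T / 2)))
    (c₁ : ℝ) (hc₁ : c₁ = (x - c₃) / Real.sinh (Real.sqrt ρ * T))
    (c₂ : ℝ) (hc₂ : c₂ = -c₃ / Real.sinh (Real.sqrt ρ * T))
    (δ : ℝ → ℝ)
    (hδ : ∀ t, δ t = c₁ * Real.sinh (Real.sqrt ρ * t)
      + c₂ * Real.sinh (Real.sqrt ρ * (T - t)) + c₃) :
    δ 0 = 0 ∧ δ T = x ∧ (∫ t in (0:ℝ)..T, δ t) = y := by
  set a := Real.sqrt ρ with ha_def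
  have ha : 0 < a := Real.sqrt_pos.mpr hρ
  have haT : 0 < a * T := mul_pos ha hT
  have hsinh : Real.sinh (a * T) ≠ 0 := ne_of_gt (Real.sinh_pos_iff.mpr haT)
  have hC : Real.cosh (a * T / 2) ≠ 0 := ne_of_gt (Real.cosh_pos (a * T / 2))
  have hS : Real.sinh (a * T / 2) ≠ 0 := ne_of_gt (Real.sinh_pos_iff.mpr (by positivity))
  refine ⟨?_, ?_, ?_⟩
  · rw [hδ 0]
    rw [hc₂]
    field_simp
    simp
  · rw [hδ T]
    rw [hc₁]
    field_simp
    simp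
  · have H1 : IntervalIntegrable (fun t => c₁ * Real.sinh (a * t)) MeasureTheory.volume 0 T :=
      (continuous_const.mul (Real.continuous_sinh.comp
        (continuous_const.mul continuous_id))).intervalIntegrable 0 T
    have H2 : IntervalIntegrable (fun t => c₂ * Real.sinh (a * (T - t)))
        MeasureTheory.volume 0 T :=
      (continuous_const.mul (Real.continuous_sinh.comp (continuous_const.mul
        (continuous_const.sub continuous_id)))).intervalIntegrable 0 T
    have H3 : IntervalIntegrable (fun _ : ℝ => c₃) MeasureTheory.volume 0 T :=
      intervalIntegrable_const
    have hi2 : (∫ t in (0:ℝ)..T, Real.sinh (a * (T - t))) = (Real.cosh (a * T) - 1) / a := by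
      rw [intervalIntegral.integral_comp_sub_left (fun t => Real.sinh (a * t)) T]
      simp [sinh_int a T ha.ne']
    have e1 : Real.cosh (a * T) = 2 * Real.cosh (a * T / 2) ^ 2 - 1 := by
      have h1 := Real.cosh_two_mul (a * T / 2)
      have h2 := Real.cosh_sq (a * T / 2)
      rw [show 2 * (a * T / 2) = a * T by ring] at h1
      rw [h1, h2]; ring
    have e2 : Real.sinh (a * T) = 2 * Real.sinh (a * T / 2) * Real.cosh (a * T / 2) := by
      have h1 := Real.sinh_two_mul (a * T / 2)
      rw [show 2 * (a * T / 2) = a * T by ring] at h1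
      exact h1
    have hcs : Real.cosh (a * T / 2) ^ 2 = Real.sinh (a * T / 2) ^ 2 + 1 :=
      Real.cosh_sq (a * T / 2)
    calc (∫ t in (0:ℝ)..T, δ t)
        = ∫ t in (0:ℝ)..T, (c₁ * Real.sinh (a * t) + c₂ * Real.sinh (a * (T - t)) + c₃) := by
          simp only [hδ]
      _ = c₁ * ((Real.cosh (a * T) - 1) / a) + c₂ * ((Real.cosh (a * T) - 1) / a) + T * c₃ := by
          rw [intervalIntegral.integral_add (H1.add H2) H3, intervalIntegral.integral_add H1 H2,
            intervalIntegral.integral_const_mul, intervalIntegral.integral_const_mul,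
            sinh_int a T ha.ne', hi2]
          simp [mul_comm]
      _ = y := by
          rw [eq_div_iff hden] at hc₃
          rw [Real.tanh_eq_sinh_div_cosh] at hc₃
          rw [hc₁, hc₂, e1, e2]
          field_simp at hc₃ ⊢
          linear_combination (2 * Real.sinh (a * T / 2)) * hc₃
            + (2 * x - 4 * c₃) * hcs
end

section
/- Let ρ, T > 0, x, y ∈ ℝ, and let δ(t) = c₁sinh(√ρt) + c₂sinh(√ρ(T-t)) + c₃ with c₃ = (√ρy - x·tanh(√ρT/2))/(√ρT - 2tanh(√ρT/2)), c₁ = (x-c₃)/sinh(√ρT), c₂ = -c₃/sinh(√ρT). Then ρ∫₀ᵀ δ(t)²dt + ∫₀ᵀ δ'(t)²dt = √ρ·(x²·coth(√ρT) + (x·tanh(√ρT/2) - √ρ·y)²/(√ρT - 2tanh(√ρT/2))). -/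
open Real

lemma tanh_lt_self' {v : ℝ} (hv : 0 < v) : Real.tanh v < v := by
  have hmono : StrictMonoOn (fun w => w * Real.cosh w - Real.sinh w) (Set.Ici 0) := by
    apply strictMonoOn_of_deriv_pos (convex_Ici _)
    · exact ((continuous_id.mul Real.continuous_cosh).sub Real.continuous_sinh).continuousOn
    · intro w hw
      rw [interior_Ici, Set.mem_Ioi] at hw
      have hd : HasDerivAt (fun w => w * Real.cosh w - Real.sinh w)
          (1 * Real.cosh w + w * Real.sinh w - Real.cosh w) w :=
        ((hasDerivAt_id w).mul (Real.hasDerivAt_cosh w)).sub (Real.hasDerivAt_sinh w)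
      rw [hd.deriv]
      have := Real.sinh_pos_iff.2 hw
      nlinarith
  have h0 : (0:ℝ) * Real.cosh 0 - Real.sinh 0 < v * Real.cosh v - Real.sinh v :=
    hmono Set.self_mem_Ici (Set.mem_Ici.2 hv.le) hv
  simp only [Real.sinh_zero, Real.cosh_zero, zero_mul, sub_zero] at h0
  rw [Real.tanh_eq_sinh_div_cosh, div_lt_iff₀ (Real.cosh_pos v)]
  linarith

theorem stmt9 (ρ T x y : ℝ) (hρ : 0 < ρ) (hT : 0 < T)
    (c₃ : ℝ) (hc₃ : c₃ = (Real.sqrt ρ * y - x * Real.tanh (Real.sqrt ρ * T / 2)) /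
      (Real.sqrt ρ * T - 2 * Real.tanh (Real.sqrt ρ * T / 2)))
    (c₁ : ℝ) (hc₁ : c₁ = (x - c₃) / Real.sinh (Real.sqrt ρ * T))
    (c₂ : ℝ) (hc₂ : c₂ = -c₃ / Real.sinh (Real.sqrt ρ * T)) :
    ρ * (∫ t in (0:ℝ)..T,
        (c₁ * Real.sinh (Real.sqrt ρ * t) + c₂ * Real.sinh (Real.sqrt ρ * (T - t)) + c₃) ^ 2)
      + (∫ t in (0:ℝ)..T,
        (c₁ * Real.sqrt ρ * Real.cosh (Real.sqrt ρ * t)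
          - c₂ * Real.sqrt ρ * Real.cosh (Real.sqrt ρ * (T - t))) ^ 2)
    = Real.sqrt ρ * (x ^ 2 * coth (Real.sqrt ρ * T)
        + (x * Real.tanh (Real.sqrt ρ * T / 2) - Real.sqrt ρ * y) ^ 2 /
          (Real.sqrt ρ * T - 2 * Real.tanh (Real.sqrt ρ * T / 2))) := by
  set s := Real.sqrt ρ with hs_def
  have hs : 0 < s := Real.sqrt_pos.2 hρ
  have hs2 : s ^ 2 = ρ := Real.sq_sqrt hρ.le
  have hsT : 0 < s * T := mul_pos hs hT
  have hSpos : 0 < Real.sinh (s * T) := Real.sinh_pos_iff.2 hsT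
  have hS : Real.sinh (s * T) ≠ 0 := ne_of_gt hSpos
  have hCh : (0:ℝ) < Real.cosh (s * T / 2) := Real.cosh_pos _
  have hSh : (0:ℝ) < Real.sinh (s * T / 2) := Real.sinh_pos_iff.2 (by positivity)
  have hD : 0 < s * T - 2 * Real.tanh (s * T / 2) := by
    have := tanh_lt_self' (show (0:ℝ) < s * T / 2 by positivity)
    linarith
  -- integrability
  have hI1 : IntervalIntegrable
      (fun t => (c₁ * Real.sinh (s * t) + c₂ * Real.sinh (s * (T - t)) + c₃) ^ 2)
      MeasureTheory.volume 0 T := by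
    apply Continuous.intervalIntegrable; fun_prop
  have hI2 : IntervalIntegrable
      (fun t => (c₁ * s * Real.cosh (s * t) - c₂ * s * Real.cosh (s * (T - t))) ^ 2)
      MeasureTheory.volume 0 T := by
    apply Continuous.intervalIntegrable; fun_prop
  rw [← hs2, ← intervalIntegral.integral_const_mul,
    ← intervalIntegral.integral_add (hI1.const_mul _) hI2]
  -- antiderivative
  have hderiv : ∀ t ∈ Set.uIcc (0:ℝ) T, HasDerivAt
      (fun t => (c₁ * Real.sinh (s * t) + c₂ * Real.sinh (s * (T - t)) + c₃) *
          (c₁ * s * Real.cosh (s * t) - c₂ * s * Real.cosh (s * (T - t))) +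
        s * c₃ * (c₁ * Real.cosh (s * t) - c₂ * Real.cosh (s * (T - t)) + s * c₃ * t))
      (s ^ 2 * (c₁ * Real.sinh (s * t) + c₂ * Real.sinh (s * (T - t)) + c₃) ^ 2 +
        (c₁ * s * Real.cosh (s * t) - c₂ * s * Real.cosh (s * (T - t))) ^ 2) t := by
    intro t _
    have hin1 : HasDerivAt (fun t : ℝ => s * t) (s * 1) t := (hasDerivAt_id t).const_mul s
    have hin2 : HasDerivAt (fun t : ℝ => s * (T - t)) (s * (0 - 1)) t :=
      ((hasDerivAt_const t T).sub (hasDerivAt_id t)).const_mul s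
    have h1 := hin1.sinh
    have h2 := hin2.sinh
    have h3 := hin1.cosh
    have h4 := hin2.cosh
    have hA : HasDerivAt
        (fun t => c₁ * Real.sinh (s * t) + c₂ * Real.sinh (s * (T - t)) + c₃)
        (c₁ * (Real.cosh (s * t) * (s * 1)) + c₂ * (Real.cosh (s * (T - t)) * (s * (0 - 1)))) t :=
      ((h1.const_mul c₁).add (h2.const_mul c₂)).add_const c₃
    have hB : HasDerivAt
        (fun t => c₁ * s * Real.cosh (s * t) - c₂ * s * Real.cosh (s * (T - t)))
        (c₁ * s * (Real.sinh (s * t) * (s * 1)) - c₂ * s * (Real.sinh (s * (T - t)) * (s * (0 - 1)))) t :=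
      (h3.const_mul (c₁ * s)).sub (h4.const_mul (c₂ * s))
    have hC : HasDerivAt
        (fun t => c₁ * Real.cosh (s * t) - c₂ * Real.cosh (s * (T - t)) + s * c₃ * t)
        (c₁ * (Real.sinh (s * t) * (s * 1)) - c₂ * (Real.sinh (s * (T - t)) * (s * (0 - 1)))
          + s * c₃ * 1) t :=
      ((h3.const_mul c₁).sub (h4.const_mul c₂)).add ((hasDerivAt_id t).const_mul (s * c₃))
    have := (hA.mul hB).add (hC.const_mul (s * c₃))
    exact this.congr_deriv (by ring)
  have hInt : IntervalIntegrable
      (fun t => s ^ 2 * (c₁ * Real.sinh (s * t) + c₂ * Real.sinh (s * (T - t)) + c₃) ^ 2 +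
        (c₁ * s * Real.cosh (s * t) - c₂ * s * Real.cosh (s * (T - t))) ^ 2)
      MeasureTheory.volume 0 T := by
    apply Continuous.intervalIntegrable; fun_prop
  rw [intervalIntegral.integral_eq_sub_of_hasDerivAt hderiv hInt]
  -- now pure algebra
  have hc3D : c₃ * (s * T - 2 * Real.tanh (s * T / 2)) = s * y - x * Real.tanh (s * T / 2) := by
    rw [hc₃]; field_simp
  have hfrac : (x * Real.tanh (s * T / 2) - s * y) ^ 2 / (s * T - 2 * Real.tanh (s * T / 2))
      = c₃ ^ 2 * (s * T - 2 * Real.tanh (s * T / 2)) := by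
    have h1 : x * Real.tanh (s * T / 2) - s * y = -(c₃ * (s * T - 2 * Real.tanh (s * T / 2))) := by
      linarith
    rw [h1]
    field_simp
  rw [hfrac]
  have hS2 : Real.sinh (s * T) = 2 * Real.sinh (s * T / 2) * Real.cosh (s * T / 2) := by
    have h := Real.sinh_two_mul (s * T / 2)
    rwa [show 2 * (s * T / 2) = s * T by ring] at h
  have hC2 : Real.cosh (s * T) = 1 + 2 * Real.sinh (s * T / 2) ^ 2 := by
    have h := Real.cosh_two_mul (s * T / 2)
    rw [show 2 * (s * T / 2) = s * T by ring, Real.cosh_sq] at h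
    rw [h]; ring
  subst hc₁ hc₂
  simp only [coth, sub_self, mul_zero, sub_zero, Real.sinh_zero, Real.cosh_zero, mul_one,
    add_zero, zero_add, mul_zero]
  rw [Real.tanh_eq_sinh_div_cosh, hS2, hC2]
  field_simp
  ring
end
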